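/- arXiv:1812.07655 — 2 statements merged into one kernel-verified Lean document; each statement's English description precedes it below -/
import Mathlib

section
/- Let B be a k-algebra, N a B-bimodule, and T = T_B(N). The sequence of T-bimodules 0 → T ⊗_B N ⊗_B T →^g T ⊗_B T →^f T → 0, where f is the multiplication of T and g(x ⊗ n ⊗ y) = xn ⊗ y − x ⊗ ny, is a relative projective resolution of T as a T-bimodule with respect to the subalgebra B ⊗ T^{op} of T ⊗ T^{op}: the bimodules T ⊗_B T and T ⊗_B N ⊗_B T are relatively projective, fg = 0, and there exist B−T-bimodule maps s : T → T ⊗_B T and r : T ⊗_B T → T ⊗_B N ⊗_B T with fs = 1, rg = 1 and gr + sf = 1. -/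
/-!
STATEMENT 4: Let B be a k-algebra, N a B-bimodule, and T = T_B(N). The sequence of
T-bimodules 0 → T ⊗_B N ⊗_B T →g T ⊗_B T →f T → 0, where f is the multiplication of T and
g(x ⊗ n ⊗ y) = xn ⊗ y − x ⊗ ny, is a relative projective resolution of T as a T-bimodule with
respect to the subalgebra B ⊗ T^op of T ⊗ T^op: the bimodules T ⊗_B T and T ⊗_B N ⊗_B T are
relatively projective, fg = 0, and there exist B−T-bimodule maps s : T → T ⊗_B T and
r : T ⊗_B T → T ⊗_B N ⊗_B T with fs = 1, rg = 1 and gr + sf = 1.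
(The relative tensor products are characterized by their universal properties; a T-bimodule is
relatively projective with respect to B ⊗ T^op when it is a direct summand of an extended
bimodule T ⊗_B U for some B−T-bimodule U.)
-/

set_option linter.unusedSectionVars false

open scoped TensorProduct
noncomputable section

section TensorAlgebra
variable (K : Type) [Field K] (B : Type) [Ring B] [Algebra K B]
variable (N : Type) [AddCommGroup N] [Module K N] [Module B N] [Module Bᵐᵒᵖ N]
  [SMulCommClass B Bᵐᵒᵖ N] [IsScalarTower K B N] [IsScalarTower K Bᵐᵒᵖ N]

/-- The relations presenting the tensor algebra `T_B(N)` of a `B`-bimodule `N` as a quotient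
of the free `k`-algebra on `B ⊕ N`:  the inclusion of `B` is a `k`-algebra morphism, the
inclusion of `N` is `k`-linear, and multiplication by `B` on either side of (the image of) `N`
is given by the bimodule actions.  This presents the `k`-algebra freely generated by the
algebra `B` and the `B`-bimodule `N`, i.e. the tensor algebra
`T_B(N) = B ⊕ N ⊕ (N ⊗_B N) ⊕ ⋯`. -/
inductive TensRel : FreeAlgebra K (B ⊕ N) → FreeAlgebra K (B ⊕ N) → Prop
  | b_add (b b' : B) : TensRel (FreeAlgebra.ι K (Sum.inl (b + b')))
      (FreeAlgebra.ι K (Sum.inl b) + FreeAlgebra.ι K (Sum.inl b'))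
  | b_smul (c : K) (b : B) : TensRel (FreeAlgebra.ι K (Sum.inl (c • b)))
      (c • FreeAlgebra.ι K (Sum.inl b))
  | b_mul (b b' : B) : TensRel (FreeAlgebra.ι K (Sum.inl (b * b')))
      (FreeAlgebra.ι K (Sum.inl b) * FreeAlgebra.ι K (Sum.inl b'))
  | b_one : TensRel (FreeAlgebra.ι K (Sum.inl 1)) 1
  | n_add (n n' : N) : TensRel (FreeAlgebra.ι K (Sum.inr (n + n')))
      (FreeAlgebra.ι K (Sum.inr n) + FreeAlgebra.ι K (Sum.inr n'))
  | n_smul (c : K) (n : N) : TensRel (FreeAlgebra.ι K (Sum.inr (c • n)))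
      (c • FreeAlgebra.ι K (Sum.inr n))
  | act_left (b : B) (n : N) : TensRel
      (FreeAlgebra.ι K (Sum.inl b) * FreeAlgebra.ι K (Sum.inr n))
      (FreeAlgebra.ι K (Sum.inr (b • n)))
  | act_right (b : B) (n : N) : TensRel
      (FreeAlgebra.ι K (Sum.inr n) * FreeAlgebra.ι K (Sum.inl b))
      (FreeAlgebra.ι K (Sum.inr (MulOpposite.op b • n)))

/-- The tensor algebra `T_B(N)` of the `B`-bimodule `N`. -/
abbrev TensorAlg : Type := RingQuot (TensRel K B N)

/-- The canonical algebra morphism `B → T_B(N)`. -/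
def TensorAlg.ofB : B →ₐ[K] TensorAlg K B N where
  toFun b := RingQuot.mkAlgHom K (TensRel K B N) (FreeAlgebra.ι K (Sum.inl b))
  map_one' := by
    show RingQuot.mkAlgHom K (TensRel K B N) (FreeAlgebra.ι K (Sum.inl 1)) = 1
    rw [RingQuot.mkAlgHom_rel K
      (show TensRel K B N (FreeAlgebra.ι K (Sum.inl 1)) 1 from TensRel.b_one), map_one]
  map_mul' b b' := by
    show RingQuot.mkAlgHom K (TensRel K B N) (FreeAlgebra.ι K (Sum.inl (b * b')))
      = RingQuot.mkAlgHom K (TensRel K B N) (FreeAlgebra.ι K (Sum.inl b))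
        * RingQuot.mkAlgHom K (TensRel K B N) (FreeAlgebra.ι K (Sum.inl b'))
    rw [RingQuot.mkAlgHom_rel K (TensRel.b_mul b b'), map_mul]
  map_zero' := by
    show RingQuot.mkAlgHom K (TensRel K B N) (FreeAlgebra.ι K (Sum.inl 0)) = 0
    have h := RingQuot.mkAlgHom_rel K
      (show TensRel K B N (FreeAlgebra.ι K (Sum.inl ((0:K) • (0:B))))
          ((0:K) • FreeAlgebra.ι K (Sum.inl (0:B))) from TensRel.b_smul 0 0)
    simpa using h
  map_add' b b' := by
    show RingQuot.mkAlgHom K (TensRel K B N) (FreeAlgebra.ι K (Sum.inl (b + b')))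
      = RingQuot.mkAlgHom K (TensRel K B N) (FreeAlgebra.ι K (Sum.inl b))
        + RingQuot.mkAlgHom K (TensRel K B N) (FreeAlgebra.ι K (Sum.inl b'))
    rw [RingQuot.mkAlgHom_rel K (TensRel.b_add b b'), map_add]
  commutes' c := by
    show RingQuot.mkAlgHom K (TensRel K B N) (FreeAlgebra.ι K (Sum.inl (algebraMap K B c)))
      = algebraMap K (TensorAlg K B N) c
    have h1 := RingQuot.mkAlgHom_rel K
      (show TensRel K B N (FreeAlgebra.ι K (Sum.inl (c • (1:B))))
          (c • FreeAlgebra.ι K (Sum.inl (1:B))) from TensRel.b_smul c 1)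
    have h2 := RingQuot.mkAlgHom_rel K
      (show TensRel K B N (FreeAlgebra.ι K (Sum.inl 1)) 1 from TensRel.b_one)
    have h3 : algebraMap K B c = c • (1 : B) := Algebra.algebraMap_eq_smul_one c
    rw [h3, h1, map_smul, h2, map_one, Algebra.algebraMap_eq_smul_one]

/-- The canonical `k`-linear map `N → T_B(N)`. -/
def TensorAlg.ofN : N →ₗ[K] TensorAlg K B N where
  toFun n := RingQuot.mkAlgHom K (TensRel K B N) (FreeAlgebra.ι K (Sum.inr n))
  map_add' n n' := by
    show RingQuot.mkAlgHom K (TensRel K B N) (FreeAlgebra.ι K (Sum.inr (n + n')))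
      = RingQuot.mkAlgHom K (TensRel K B N) (FreeAlgebra.ι K (Sum.inr n))
        + RingQuot.mkAlgHom K (TensRel K B N) (FreeAlgebra.ι K (Sum.inr n'))
    rw [RingQuot.mkAlgHom_rel K (TensRel.n_add n n'), map_add]
  map_smul' c n := by
    show RingQuot.mkAlgHom K (TensRel K B N) (FreeAlgebra.ι K (Sum.inr (c • n)))
      = c • RingQuot.mkAlgHom K (TensRel K B N) (FreeAlgebra.ι K (Sum.inr n))
    rw [RingQuot.mkAlgHom_rel K (TensRel.n_smul c n), map_smul]

set_option linter.unusedSectionVars false in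
theorem TensorAlg.ofB_mul_ofN (b : B) (n : N) :
    TensorAlg.ofB K B N b * TensorAlg.ofN K B N n = TensorAlg.ofN K B N (b • n) := by
  show RingQuot.mkAlgHom K (TensRel K B N) _ * RingQuot.mkAlgHom K (TensRel K B N) _ = _
  rw [← map_mul, RingQuot.mkAlgHom_rel K (TensRel.act_left b n)]; rfl

set_option linter.unusedSectionVars false in
theorem TensorAlg.ofN_mul_ofB (b : B) (n : N) :
    TensorAlg.ofN K B N n * TensorAlg.ofB K B N b
      = TensorAlg.ofN K B N (MulOpposite.op b • n) := by
  show RingQuot.mkAlgHom K (TensRel K B N) _ * RingQuot.mkAlgHom K (TensRel K B N) _ = _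
  rw [← map_mul, RingQuot.mkAlgHom_rel K (TensRel.act_right b n)]; rfl

end TensorAlgebra

section Statement4
variable (K : Type) [Field K] (B : Type) [Ring B] [Algebra K B]
variable (N : Type) [AddCommGroup N] [Module K N] [Module B N] [Module Bᵐᵒᵖ N]
  [SMulCommClass B Bᵐᵒᵖ N] [IsScalarTower K B N] [IsScalarTower K Bᵐᵒᵖ N]

/-- A bundled `B−T`-bimodule (left `B`-module, right `T`-module). -/
structure BTBimod : Type 1 where
  U : Type
  [ag : AddCommGroup U]
  [mdk : Module K U]
  [mb : Module B U]
  [mt : Module (TensorAlg K B N)ᵐᵒᵖ U]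

attribute [instance] BTBimod.ag BTBimod.mdk BTBimod.mb BTBimod.mt

/-- A bundled `T`-bimodule. -/
structure TBimod : Type 1 where
  X : Type
  [ag : AddCommGroup X]
  [mdk : Module K X]
  [ml : Module (TensorAlg K B N) X]
  [mr : Module (TensorAlg K B N)ᵐᵒᵖ X]

attribute [instance] TBimod.ag TBimod.mdk TBimod.ml TBimod.mr

/-- `(E, σ)` realizes the extended `T`-bimodule `T ⊗_B U` of a `B−T`-bimodule `U`:
`σ` is the universal `K`-bilinear `B`-balanced map, the left `T`-action acts on the left
factor and the right `T`-action on `U`. -/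
def RealizesExtended (Wu : BTBimod K B N) (E : Type) [AddCommGroup E] [Module K E]
    [Module (TensorAlg K B N) E] [Module (TensorAlg K B N)ᵐᵒᵖ E]
    (σ : TensorAlg K B N → Wu.U → E) : Prop :=
  (∀ (c : K) (x x' : TensorAlg K B N) (u : Wu.U),
    σ (c • x + x') u = c • σ x u + σ x' u) ∧
  (∀ (c : K) (x : TensorAlg K B N) (u u' : Wu.U),
    σ x (c • u + u') = c • σ x u + σ x u') ∧
  (∀ (x : TensorAlg K B N) (b : B) (u : Wu.U),
    σ (x * TensorAlg.ofB K B N b) u = σ x (b • u)) ∧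
  (∀ (a x : TensorAlg K B N) (u : Wu.U), a • σ x u = σ (a * x) u) ∧
  (∀ (a : (TensorAlg K B N)ᵐᵒᵖ) (x : TensorAlg K B N) (u : Wu.U),
    a • σ x u = σ x (a • u)) ∧
  (∀ (Z : Type) [AddCommGroup Z] [Module K Z] (φ : TensorAlg K B N → Wu.U → Z),
    (∀ (c : K) (x x' : TensorAlg K B N) (u : Wu.U),
      φ (c • x + x') u = c • φ x u + φ x' u) →
    (∀ (c : K) (x : TensorAlg K B N) (u u' : Wu.U),
      φ x (c • u + u') = c • φ x u + φ x u') →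
    (∀ (x : TensorAlg K B N) (b : B) (u : Wu.U),
      φ (x * TensorAlg.ofB K B N b) u = φ x (b • u)) →
    ∃! ψ : E →ₗ[K] Z, ∀ x u, ψ (σ x u) = φ x u)

/-- A `T`-bimodule `P` is relatively projective with respect to `B ⊗ Tᵒᵖ ⊆ T ⊗ Tᵒᵖ`:
it is a direct summand (through `T`-bimodule maps) of an extended bimodule `T ⊗_B U`
for some `B−T`-bimodule `U`. -/
def IsRelProjTBimod (P : Type) [AddCommGroup P] [Module K P]
    [Module (TensorAlg K B N) P] [Module (TensorAlg K B N)ᵐᵒᵖ P] : Prop :=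
  ∃ (Wu : BTBimod K B N) (E : TBimod K B N) (σ : TensorAlg K B N → Wu.U → E.X),
    RealizesExtended K B N Wu E.X σ ∧
    ∃ (i : P →ₗ[K] E.X) (π : E.X →ₗ[K] P),
      (∀ (a : TensorAlg K B N) (p : P), i (a • p) = a • i p) ∧
      (∀ (a : (TensorAlg K B N)ᵐᵒᵖ) (p : P), i (a • p) = a • i p) ∧
      (∀ (a : TensorAlg K B N) (z : E.X), π (a • z) = a • π z) ∧
      (∀ (a : (TensorAlg K B N)ᵐᵒᵖ) (z : E.X), π (a • z) = a • π z) ∧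
      (∀ p, π (i p) = p)

/-- `(P2, σ2)` realizes the `T`-bimodule `T ⊗_B T`. -/
def RealizesTT (P2 : Type) [AddCommGroup P2] [Module K P2]
    [Module (TensorAlg K B N) P2] [Module (TensorAlg K B N)ᵐᵒᵖ P2]
    (σ2 : TensorAlg K B N → TensorAlg K B N → P2) : Prop :=
  (∀ (c : K) (x x' y : TensorAlg K B N), σ2 (c • x + x') y = c • σ2 x y + σ2 x' y) ∧
  (∀ (c : K) (x y y' : TensorAlg K B N), σ2 x (c • y + y') = c • σ2 x y + σ2 x y') ∧
  (∀ (x y : TensorAlg K B N) (b : B),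
    σ2 (x * TensorAlg.ofB K B N b) y = σ2 x (TensorAlg.ofB K B N b * y)) ∧
  (∀ (a x y : TensorAlg K B N), a • σ2 x y = σ2 (a * x) y) ∧
  (∀ (a : (TensorAlg K B N)ᵐᵒᵖ) (x y : TensorAlg K B N),
    a • σ2 x y = σ2 x (y * a.unop)) ∧
  (∀ (Z : Type) [AddCommGroup Z] [Module K Z] (φ : TensorAlg K B N → TensorAlg K B N → Z),
    (∀ (c : K) (x x' y : TensorAlg K B N), φ (c • x + x') y = c • φ x y + φ x' y) →
    (∀ (c : K) (x y y' : TensorAlg K B N), φ x (c • y + y') = c • φ x y + φ x y') →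
    (∀ (x y : TensorAlg K B N) (b : B),
      φ (x * TensorAlg.ofB K B N b) y = φ x (TensorAlg.ofB K B N b * y)) →
    ∃! ψ : P2 →ₗ[K] Z, ∀ x y, ψ (σ2 x y) = φ x y)

/-- `(P3, σ3)` realizes the `T`-bimodule `T ⊗_B N ⊗_B T`. -/
def RealizesTNT (P3 : Type) [AddCommGroup P3] [Module K P3]
    [Module (TensorAlg K B N) P3] [Module (TensorAlg K B N)ᵐᵒᵖ P3]
    (σ3 : TensorAlg K B N → N → TensorAlg K B N → P3) : Prop :=
  (∀ (c : K) (x x' y : TensorAlg K B N) (n : N),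
    σ3 (c • x + x') n y = c • σ3 x n y + σ3 x' n y) ∧
  (∀ (c : K) (x y : TensorAlg K B N) (n n' : N),
    σ3 x (c • n + n') y = c • σ3 x n y + σ3 x n' y) ∧
  (∀ (c : K) (x y y' : TensorAlg K B N) (n : N),
    σ3 x n (c • y + y') = c • σ3 x n y + σ3 x n y') ∧
  (∀ (x y : TensorAlg K B N) (b : B) (n : N),
    σ3 (x * TensorAlg.ofB K B N b) n y = σ3 x (b • n) y) ∧
  (∀ (x y : TensorAlg K B N) (b : B) (n : N),
    σ3 x (MulOpposite.op b • n) y = σ3 x n (TensorAlg.ofB K B N b * y)) ∧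
  (∀ (a x y : TensorAlg K B N) (n : N), a • σ3 x n y = σ3 (a * x) n y) ∧
  (∀ (a : (TensorAlg K B N)ᵐᵒᵖ) (x y : TensorAlg K B N) (n : N),
    a • σ3 x n y = σ3 x n (y * a.unop)) ∧
  (∀ (Z : Type) [AddCommGroup Z] [Module K Z]
      (φ : TensorAlg K B N → N → TensorAlg K B N → Z),
    (∀ (c : K) (x x' y : TensorAlg K B N) (n : N),
      φ (c • x + x') n y = c • φ x n y + φ x' n y) →
    (∀ (c : K) (x y : TensorAlg K B N) (n n' : N),
      φ x (c • n + n') y = c • φ x n y + φ x n' y) →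
    (∀ (c : K) (x y y' : TensorAlg K B N) (n : N),
      φ x n (c • y + y') = c • φ x n y + φ x n y') →
    (∀ (x y : TensorAlg K B N) (b : B) (n : N),
      φ (x * TensorAlg.ofB K B N b) n y = φ x (b • n) y) →
    (∀ (x y : TensorAlg K B N) (b : B) (n : N),
      φ x (MulOpposite.op b • n) y = φ x n (TensorAlg.ofB K B N b * y)) →
    ∃! ψ : P3 →ₗ[K] Z, ∀ x n y, ψ (σ3 x n y) = φ x n y)

end Statement4

/-
The homotopy comes from the derivation `D : T → T ⊗_B N ⊗_B T` that kills `B` and sends `n` to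
`1 ⊗ n ⊗ 1`; it exists because `T` is freely generated by the algebra `B` and the bimodule `N`.
With `s x = 1 ⊗ x` and `r (x ⊗ y) = D x ⬝ y`, the maps `g ∘ D` and `x ↦ x ⊗ 1 - 1 ⊗ x` are two
derivations `T → T ⊗_B T` that agree on `B` and `N`, hence are equal, which gives `g r + s f = 1`;
`r g = 1` is the Leibniz rule. `T ⊗_B T` is extended from `T`, and `T ⊗_B N ⊗_B T` from its
sub-bimodule `1 ⊗ N ⊗ T`.

The bimodules are only given through universal properties, with no compatibility between the
three scalar actions; these compatibilities hold because the elementary tensors span.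
-/

def LinearMap.ofMapSMulAdd {R M M₂ : Type*} [Semiring R] [AddCommMonoid M] [AddCommGroup M₂]
    [Module R M] [Module R M₂] (f : M → M₂) (h : ∀ (c : R) x y, f (c • x + y) = c • f x + f y) :
    M →ₗ[R] M₂ :=
  have map_zero : f 0 = 0 := by simpa using h 1 0 0
  { toFun := f
    map_add' x y := by simpa using h 1 x y
    map_smul' c x := by simpa [map_zero] using h c x 0 }

theorem Submodule.span_eq_top_of_linearMap_eq_zero {R P : Type*} [Ring R] [AddCommGroup P]
    [Module R P] {S : Set P}
    (h : ∀ f : P →ₗ[R] P ⧸ span R S, (∀ s ∈ S, f s = 0) → f = 0) : span R S = ⊤ := by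
  rw [← ker_mkQ (span R S), h (span R S).mkQ fun s hs =>
    (Quotient.mk_eq_zero _).2 (subset_span hs), LinearMap.ker_zero]

theorem SMulCommClass.of_span_eq_top {R A P : Type*} [CommSemiring R] [Monoid A]
    [AddCommMonoid P] [Module R P] [DistribMulAction A P] {S : Set P}
    (hS : Submodule.span R S = ⊤) (h : ∀ (a : A) (c : R), ∀ s ∈ S, a • c • s = c • a • s) :
    SMulCommClass A R P where
  smul_comm a c z := by
    have hz : z ∈ Submodule.span R S := hS ▸ trivial
    induction hz using Submodule.span_induction generalizing c with
    | mem s hs => exact h a c s hs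
    | zero => simp
    | add x y _ _ hx hy => simp only [smul_add, hx, hy]
    | smul d x _ hx => rw [smul_smul, hx, ← smul_smul, hx]

def LinearMap.IsDerivation {R A M : Type*} [Semiring R] [Semiring A] [Module R A]
    [AddCommMonoid M] [Module R M] [SMul A M] [SMul Aᵐᵒᵖ M] (D : A →ₗ[R] M) : Prop :=
  ∀ x y, D (x * y) = x • D y + MulOpposite.op y • D x

namespace TensorAlg

variable {K : Type} [Field K] {B : Type} [Ring B] [Algebra K B]
variable {N : Type} [AddCommGroup N] [Module K N] [Module B N] [Module Bᵐᵒᵖ N]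
  [SMulCommClass B Bᵐᵒᵖ N] [IsScalarTower K B N] [IsScalarTower K Bᵐᵒᵖ N]

@[elab_as_elim]
theorem induction_on {C : TensorAlg K B N → Prop} (x : TensorAlg K B N)
    (ofB : ∀ b, C (ofB K B N b)) (ofN : ∀ n, C (ofN K B N n)) (add : ∀ x y, C x → C y → C (x + y))
    (mul : ∀ x y, C x → C y → C (x * y)) : C x := by
  obtain ⟨z, rfl⟩ := RingQuot.mkAlgHom_surjective K (TensRel K B N) x
  induction z using FreeAlgebra.induction with
  | grade0 c => simpa only [AlgHom.commutes] using ofB (algebraMap K B c)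
  | grade1 z => cases z with
    | inl b => exact ofB b
    | inr n => exact ofN n
  | mul z z' hz hz' => rw [map_mul]; exact mul _ _ hz hz'
  | add z z' hz hz' => rw [map_add]; exact add _ _ hz hz'

variable {M : Type} [AddCommGroup M] [Module K M] [Module (TensorAlg K B N) M]
  [Module (TensorAlg K B N)ᵐᵒᵖ M]

theorem derivation_ext {D D' : TensorAlg K B N →ₗ[K] M} (hD : D.IsDerivation)
    (hD' : D'.IsDerivation) (hB : ∀ b, D (ofB K B N b) = D' (ofB K B N b))
    (hN : ∀ n, D (ofN K B N n) = D' (ofN K B N n)) : D = D' :=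
  LinearMap.ext fun x => x.induction_on hB hN (fun x y hx hy => by rw [map_add, map_add, hx, hy])
    fun x y hx hy => by rw [hD, hD', hx, hy]

/- A derivation `D` is the same as an algebra map `x ↦ (x, D x)` into the square-zero extension
`T ⋉ M`; on the presentation of `T` this map is prescribed on the generators. -/
theorem exists_derivation [SMulCommClass (TensorAlg K B N) (TensorAlg K B N)ᵐᵒᵖ M]
    [IsScalarTower K (TensorAlg K B N) M] [IsScalarTower K (TensorAlg K B N)ᵐᵒᵖ M]
    (d : N →ₗ[K] M) (hl : ∀ b n, ofB K B N b • d n = d (b • n))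
    (hr : ∀ b n, MulOpposite.op (ofB K B N b) • d n = d (MulOpposite.op b • n)) :
    ∃ D : TensorAlg K B N →ₗ[K] M, D.IsDerivation ∧ (∀ b, D (ofB K B N b) = 0) ∧
      ∀ n, D (ofN K B N n) = d n := by
  let F : FreeAlgebra K (B ⊕ N) →ₐ[K] TrivSqZeroExt (TensorAlg K B N) M := FreeAlgebra.lift K
    (Sum.elim (fun b => .inl (ofB K B N b)) fun n => .inl (ofN K B N n) + .inr (d n))
  have hF : ∀ ⦃x y⦄, TensRel K B N x y → F x = F y := by
    intro x y h
    induction h with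
    | n_add => simp [F, add_add_add_comm]
    | act_left b n =>
      simp only [F, map_mul, FreeAlgebra.lift_ι_apply, Sum.elim_inl, Sum.elim_inr, mul_add,
        TrivSqZeroExt.inl_mul_inl, TrivSqZeroExt.inl_mul_inr, ofB_mul_ofN, hl]
    | act_right b n =>
      simp only [F, map_mul, FreeAlgebra.lift_ι_apply, Sum.elim_inl, Sum.elim_inr, add_mul,
        TrivSqZeroExt.inl_mul_inl, TrivSqZeroExt.inr_mul_inl, ofN_mul_ofB, hr]
    | _ => simp [F]
  let Φ := RingQuot.liftAlgHom K ⟨F, hF⟩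
  have hΦB (b : B) : Φ (ofB K B N b) = .inl (ofB K B N b) :=
    (RingQuot.liftAlgHom_mkAlgHom_apply K F hF _).trans (by simp [F])
  have hΦN (n : N) : Φ (ofN K B N n) = .inl (ofN K B N n) + .inr (d n) :=
    (RingQuot.liftAlgHom_mkAlgHom_apply K F hF _).trans (by simp [F])
  have hfst (x : TensorAlg K B N) : (Φ x).fst = x :=
    x.induction_on (by simp [hΦB]) (by simp [hΦN]) (by simp_all) (by simp_all)
  refine ⟨⟨⟨fun x => (Φ x).snd, by simp⟩, by simp⟩, fun x y => ?_, by simp [hΦB], by simp [hΦN]⟩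
  simp [hfst]

end TensorAlg

section Realizations

variable {K : Type} [Field K] {B : Type} [Ring B] [Algebra K B]
variable {N : Type} [AddCommGroup N] [Module K N] [Module B N] [Module Bᵐᵒᵖ N]
  [SMulCommClass B Bᵐᵒᵖ N] [IsScalarTower K B N] [IsScalarTower K Bᵐᵒᵖ N]

namespace RealizesTT

variable {P2 : Type} [AddCommGroup P2] [Module K P2]
  [Module (TensorAlg K B N) P2] [Module (TensorAlg K B N)ᵐᵒᵖ P2]
  {σ2 : TensorAlg K B N → TensorAlg K B N → P2}

def linearMapLeft (h2 : RealizesTT K B N P2 σ2) (y : TensorAlg K B N) :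
    TensorAlg K B N →ₗ[K] P2 :=
  .ofMapSMulAdd (σ2 · y) fun c x x' => h2.1 c x x' y

def linearMapRight (h2 : RealizesTT K B N P2 σ2) (x : TensorAlg K B N) :
    TensorAlg K B N →ₗ[K] P2 :=
  .ofMapSMulAdd (σ2 x) (h2.2.1 · x)

@[simp]
theorem linearMapLeft_apply (h2 : RealizesTT K B N P2 σ2) (x y : TensorAlg K B N) :
    h2.linearMapLeft y x = σ2 x y :=
  rfl

@[simp]
theorem linearMapRight_apply (h2 : RealizesTT K B N P2 σ2) (x y : TensorAlg K B N) :
    h2.linearMapRight x y = σ2 x y :=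
  rfl

theorem map_add_left (h2 : RealizesTT K B N P2 σ2) (x x' y : TensorAlg K B N) :
    σ2 (x + x') y = σ2 x y + σ2 x' y :=
  (h2.linearMapLeft y).map_add x x'

theorem map_smul_left (h2 : RealizesTT K B N P2 σ2) (c : K) (x y : TensorAlg K B N) :
    σ2 (c • x) y = c • σ2 x y :=
  (h2.linearMapLeft y).map_smul c x

theorem map_add_right (h2 : RealizesTT K B N P2 σ2) (x y y' : TensorAlg K B N) :
    σ2 x (y + y') = σ2 x y + σ2 x y' :=
  (h2.linearMapRight x).map_add y y'

theorem map_smul_right (h2 : RealizesTT K B N P2 σ2) (c : K) (x y : TensorAlg K B N) :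
    σ2 x (c • y) = c • σ2 x y :=
  (h2.linearMapRight x).map_smul c y

theorem span_range_eq_top (h2 : RealizesTT K B N P2 σ2) :
    Submodule.span K (Set.range (Function.uncurry σ2)) = ⊤ :=
  Submodule.span_eq_top_of_linearMap_eq_zero fun f hf =>
    (h2.2.2.2.2.2 _ 0 (by simp) (by simp) (by simp)).unique
      (fun x y => hf _ ⟨(x, y), rfl⟩) fun _ _ => rfl

theorem ext (h2 : RealizesTT K B N P2 σ2) {Z : Type} [AddCommGroup Z] [Module K Z]
    {f g : P2 →ₗ[K] Z} (h : ∀ x y, f (σ2 x y) = g (σ2 x y)) : f = g :=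
  LinearMap.ext_on h2.span_range_eq_top (by rintro _ ⟨⟨x, y⟩, rfl⟩; exact h x y)

theorem map_smul_eq_of_tmul (h2 : RealizesTT K B N P2 σ2) {Z : Type} [AddCommGroup Z] [Module K Z]
    {A : Type} [Monoid A] [DistribMulAction A P2] [SMulCommClass A K P2] (f : P2 →ₗ[K] Z)
    (a : A) (w : Z →ₗ[K] Z) (h : ∀ x y, f (a • σ2 x y) = w (f (σ2 x y))) (z : P2) :
    f (a • z) = w (f z) :=
  LinearMap.congr_fun (h2.ext (f := f ∘ₗ DistribSMul.toLinearMap K P2 a) (g := w ∘ₗ f) h) z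

theorem smulCommClass_left (h2 : RealizesTT K B N P2 σ2) :
    SMulCommClass (TensorAlg K B N) K P2 :=
  .of_span_eq_top h2.span_range_eq_top <| by
    rintro a c _ ⟨⟨x, y⟩, rfl⟩
    rw [Function.uncurry_apply_pair, ← h2.map_smul_left, h2.2.2.2.1, h2.2.2.2.1,
      mul_smul_comm, h2.map_smul_left]

theorem smulCommClass_right (h2 : RealizesTT K B N P2 σ2) :
    SMulCommClass (TensorAlg K B N)ᵐᵒᵖ K P2 :=
  .of_span_eq_top h2.span_range_eq_top <| by
    rintro a c _ ⟨⟨x, y⟩, rfl⟩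
    rw [Function.uncurry_apply_pair, ← h2.map_smul_left, h2.2.2.2.2.1, h2.2.2.2.2.1,
      h2.map_smul_left]

end RealizesTT

namespace RealizesTNT

variable {P3 : Type} [AddCommGroup P3] [Module K P3]
  [Module (TensorAlg K B N) P3] [Module (TensorAlg K B N)ᵐᵒᵖ P3]
  {σ3 : TensorAlg K B N → N → TensorAlg K B N → P3}

def linearMapMiddle (h3 : RealizesTNT K B N P3 σ3) (x y : TensorAlg K B N) : N →ₗ[K] P3 :=
  .ofMapSMulAdd (σ3 x · y) (h3.2.1 · x y)

@[simp]
theorem linearMapMiddle_apply (h3 : RealizesTNT K B N P3 σ3) (x : TensorAlg K B N) (n : N)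
    (y : TensorAlg K B N) : h3.linearMapMiddle x y n = σ3 x n y :=
  rfl

theorem map_smul_left (h3 : RealizesTNT K B N P3 σ3) (c : K) (x : TensorAlg K B N) (n : N)
    (y : TensorAlg K B N) : σ3 (c • x) n y = c • σ3 x n y :=
  (LinearMap.ofMapSMulAdd (σ3 · n y) fun c x x' => h3.1 c x x' y n).map_smul c x

theorem map_smul_right (h3 : RealizesTNT K B N P3 σ3) (c : K) (x : TensorAlg K B N) (n : N)
    (y : TensorAlg K B N) : σ3 x n (c • y) = c • σ3 x n y :=
  (LinearMap.ofMapSMulAdd (σ3 x n) (h3.2.2.1 · x · · n)).map_smul c y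

theorem span_range_eq_top (h3 : RealizesTNT K B N P3 σ3) :
    Submodule.span K (Set.range fun p : TensorAlg K B N × N × TensorAlg K B N =>
      σ3 p.1 p.2.1 p.2.2) = ⊤ :=
  Submodule.span_eq_top_of_linearMap_eq_zero fun f hf =>
    (h3.2.2.2.2.2.2.2 _ 0 (by simp) (by simp) (by simp) (by simp) (by simp)).unique
      (fun x n y => hf _ ⟨(x, n, y), rfl⟩) fun _ _ _ => rfl

theorem ext (h3 : RealizesTNT K B N P3 σ3) {Z : Type} [AddCommGroup Z] [Module K Z]
    {f g : P3 →ₗ[K] Z} (h : ∀ x n y, f (σ3 x n y) = g (σ3 x n y)) : f = g :=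
  LinearMap.ext_on h3.span_range_eq_top (by rintro _ ⟨⟨x, n, y⟩, rfl⟩; exact h x n y)

theorem map_smul_eq_of_tmul (h3 : RealizesTNT K B N P3 σ3) {Z : Type} [AddCommGroup Z] [Module K Z]
    {A : Type} [Monoid A] [DistribMulAction A P3] [SMulCommClass A K P3] (f : P3 →ₗ[K] Z)
    (a : A) (w : Z →ₗ[K] Z) (h : ∀ x n y, f (a • σ3 x n y) = w (f (σ3 x n y))) (z : P3) :
    f (a • z) = w (f z) :=
  LinearMap.congr_fun (h3.ext (f := f ∘ₗ DistribSMul.toLinearMap K P3 a) (g := w ∘ₗ f) h) z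

theorem smulCommClass_left (h3 : RealizesTNT K B N P3 σ3) :
    SMulCommClass (TensorAlg K B N) K P3 :=
  .of_span_eq_top h3.span_range_eq_top <| by
    rintro a c _ ⟨⟨x, n, y⟩, rfl⟩
    rw [← h3.map_smul_left, h3.2.2.2.2.2.1, h3.2.2.2.2.2.1, mul_smul_comm, h3.map_smul_left]

theorem smulCommClass_right (h3 : RealizesTNT K B N P3 σ3) :
    SMulCommClass (TensorAlg K B N)ᵐᵒᵖ K P3 :=
  .of_span_eq_top h3.span_range_eq_top <| by
    rintro a c _ ⟨⟨x, n, y⟩, rfl⟩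
    rw [← h3.map_smul_left, h3.2.2.2.2.2.2.1, h3.2.2.2.2.2.2.1, h3.map_smul_left]

theorem smulCommClass_left_right (h3 : RealizesTNT K B N P3 σ3) :
    SMulCommClass (TensorAlg K B N) (TensorAlg K B N)ᵐᵒᵖ P3 := by
  have := h3.smulCommClass_left
  have := h3.smulCommClass_right
  refine ⟨fun a a' z => LinearMap.congr_fun (h3.ext (f := DistribSMul.toLinearMap K P3 a ∘ₗ
    DistribSMul.toLinearMap K P3 a') (g := DistribSMul.toLinearMap K P3 a' ∘ₗ
    DistribSMul.toLinearMap K P3 a) fun x n y => ?_) z⟩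
  simp only [LinearMap.comp_apply, DistribSMul.toLinearMap_apply]
  rw [h3.2.2.2.2.2.2.1, h3.2.2.2.2.2.1, h3.2.2.2.2.2.1, h3.2.2.2.2.2.2.1]

theorem isScalarTower_left (h3 : RealizesTNT K B N P3 σ3) :
    IsScalarTower K (TensorAlg K B N) P3 := by
  have := h3.smulCommClass_left
  refine ⟨fun c a z => LinearMap.congr_fun (h3.ext (f := DistribSMul.toLinearMap K P3 (c • a))
    (g := c • DistribSMul.toLinearMap K P3 a) fun x n y => ?_) z⟩
  simp only [LinearMap.smul_apply, DistribSMul.toLinearMap_apply]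
  rw [h3.2.2.2.2.2.1, h3.2.2.2.2.2.1, smul_mul_assoc, h3.map_smul_left]

theorem isScalarTower_right (h3 : RealizesTNT K B N P3 σ3) :
    IsScalarTower K (TensorAlg K B N)ᵐᵒᵖ P3 := by
  have := h3.smulCommClass_right
  refine ⟨fun c a z => LinearMap.congr_fun (h3.ext (f := DistribSMul.toLinearMap K P3 (c • a))
    (g := c • DistribSMul.toLinearMap K P3 a) fun x n y => ?_) z⟩
  simp only [LinearMap.smul_apply, DistribSMul.toLinearMap_apply]
  rw [h3.2.2.2.2.2.2.1, h3.2.2.2.2.2.2.1, MulOpposite.unop_smul, mul_smul_comm,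
    h3.map_smul_right]

end RealizesTNT
end Realizations

section RelativeProjectivity

variable {K : Type} [Field K] {B : Type} [Ring B] [Algebra K B]
variable {N : Type} [AddCommGroup N] [Module K N] [Module B N] [Module Bᵐᵒᵖ N]
  [SMulCommClass B Bᵐᵒᵖ N] [IsScalarTower K B N] [IsScalarTower K Bᵐᵒᵖ N]

theorem isRelProjTBimod_of_realizesExtended {P : Type} [AddCommGroup P] [Module K P]
    [Module (TensorAlg K B N) P] [Module (TensorAlg K B N)ᵐᵒᵖ P] (Wu : BTBimod K B N)
    (σ : TensorAlg K B N → Wu.U → P) (h : RealizesExtended K B N Wu P σ) :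
    IsRelProjTBimod K B N P :=
  ⟨Wu, ⟨P⟩, σ, h, .id, .id, fun _ _ => rfl, fun _ _ => rfl, fun _ _ => rfl, fun _ _ => rfl,
    fun _ => rfl⟩

variable (K B N) in
def TensorAlg.regularBTBimod : BTBimod K B N where
  U := TensorAlg K B N
  mb := .compHom _ (TensorAlg.ofB K B N).toRingHom

theorem RealizesTT.realizesExtended {P2 : Type} [AddCommGroup P2] [Module K P2]
    [Module (TensorAlg K B N) P2] [Module (TensorAlg K B N)ᵐᵒᵖ P2]
    {σ2 : TensorAlg K B N → TensorAlg K B N → P2} (h2 : RealizesTT K B N P2 σ2) :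
    RealizesExtended K B N (TensorAlg.regularBTBimod K B N) P2 σ2 :=
  ⟨h2.1, h2.2.1, fun x b y => h2.2.2.1 x y b, h2.2.2.2.1, h2.2.2.2.2.1,
    fun Z _ _ φ hφ₁ hφ₂ hφ₃ => h2.2.2.2.2.2 Z φ hφ₁ hφ₂ fun x y b => hφ₃ x b y⟩

namespace RealizesTNT

variable {P3 : Type} [AddCommGroup P3] [Module K P3]
  [Module (TensorAlg K B N) P3] [Module (TensorAlg K B N)ᵐᵒᵖ P3]
  {σ3 : TensorAlg K B N → N → TensorAlg K B N → P3}

/- The sub-bimodule `1 ⊗ N ⊗ T`. The multiplication `T ⊗_B (1 ⊗ N ⊗ T) → T ⊗_B N ⊗_B T` is an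
isomorphism, so `T ⊗_B N ⊗_B T` is extended from it. -/
variable (σ3) in
def spanOne : Submodule K P3 :=
  Submodule.span K (Set.range fun p : N × TensorAlg K B N => σ3 1 p.1 p.2)

theorem mem_spanOne (n : N) (y : TensorAlg K B N) : σ3 1 n y ∈ spanOne σ3 :=
  Submodule.subset_span ⟨(n, y), rfl⟩

theorem map_mem_spanOne {f : P3 →ₗ[K] P3} (hf : ∀ n y, f (σ3 1 n y) ∈ spanOne σ3) {v : P3}
    (hv : v ∈ spanOne σ3) : f v ∈ spanOne σ3 :=
  Submodule.span_le.2 (show Set.range _ ⊆ ((spanOne σ3).comap f : Set P3) by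
    rintro _ ⟨⟨n, y⟩, rfl⟩; exact hf n y) hv

theorem smul_map_one (h3 : RealizesTNT K B N P3 σ3) (x : TensorAlg K B N) (n : N)
    (y : TensorAlg K B N) : x • σ3 1 n y = σ3 x n y := by
  rw [h3.2.2.2.2.2.1, mul_one]

theorem ofB_smul_map_one (h3 : RealizesTNT K B N P3 σ3) (b : B) (n : N) (y : TensorAlg K B N) :
    TensorAlg.ofB K B N b • σ3 1 n y = σ3 1 (b • n) y := by
  rw [h3.smul_map_one, ← h3.2.2.2.1 1 y b n, one_mul]

theorem ofB_smul_mem_spanOne (h3 : RealizesTNT K B N P3 σ3) (b : B) {v : P3}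
    (hv : v ∈ spanOne σ3) : TensorAlg.ofB K B N b • v ∈ spanOne σ3 := by
  have := h3.smulCommClass_left
  refine map_mem_spanOne (f := DistribSMul.toLinearMap K P3 (TensorAlg.ofB K B N b))
    (fun n y => ?_) hv
  rw [DistribSMul.toLinearMap_apply, h3.ofB_smul_map_one]
  exact mem_spanOne _ _

theorem op_smul_mem_spanOne (h3 : RealizesTNT K B N P3 σ3) (a : (TensorAlg K B N)ᵐᵒᵖ)
    {v : P3} (hv : v ∈ spanOne σ3) : a • v ∈ spanOne σ3 := by
  have := h3.smulCommClass_right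
  refine map_mem_spanOne (f := DistribSMul.toLinearMap K P3 a) (fun n y => ?_) hv
  rw [DistribSMul.toLinearMap_apply, h3.2.2.2.2.2.2.1]
  exact mem_spanOne _ _

abbrev spanOneBTBimod (h3 : RealizesTNT K B N P3 σ3) : BTBimod K B N :=
  letI : Module B P3 := .compHom P3 (TensorAlg.ofB K B N).toRingHom
  letI : SMul B (spanOne σ3) := ⟨fun b v => ⟨_, h3.ofB_smul_mem_spanOne b v.2⟩⟩
  letI : SMul (TensorAlg K B N)ᵐᵒᵖ (spanOne σ3) :=
    ⟨fun a v => ⟨_, h3.op_smul_mem_spanOne a v.2⟩⟩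
  { U := spanOne σ3
    mb := Subtype.val_injective.module B (spanOne σ3).subtype.toAddMonoidHom fun _ _ => rfl
    mt := Subtype.val_injective.module _ (spanOne σ3).subtype.toAddMonoidHom fun _ _ => rfl }

theorem realizesExtended (h3 : RealizesTNT K B N P3 σ3) :
    RealizesExtended K B N h3.spanOneBTBimod P3 fun x (v : spanOne σ3) => x • (v : P3) := by
  have := h3.smulCommClass_left
  have := h3.isScalarTower_left
  have := h3.smulCommClass_left_right
  refine ⟨fun c x x' v => by beta_reduce; rw [add_smul, smul_assoc], fun c x v v' => ?_,
    fun x b v => mul_smul x _ (v : P3), fun a x v => (mul_smul a x (v : P3)).symm,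
    fun a x v => (smul_comm x a (v : P3)).symm, fun Z _ _ φ hφ₁ hφ₂ hφ₃ => ?_⟩
  · change x • (c • (v : P3) + v') = _
    rw [smul_add, smul_comm]
  let φₗ x : spanOne σ3 →ₗ[K] Z := .ofMapSMulAdd (φ x) (hφ₂ · x)
  obtain ⟨ψ, hψ, huniq⟩ := h3.2.2.2.2.2.2.2 Z (fun x n y => φ x ⟨σ3 1 n y, mem_spanOne n y⟩)
    (fun c x x' y n => hφ₁ c x x' _)
    (fun c x y n n' => by rw [← hφ₂]; exact congrArg (φ x) (Subtype.ext (h3.2.1 c 1 y n n')))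
    (fun c x y y' n => by rw [← hφ₂]; exact congrArg (φ x) (Subtype.ext (h3.2.2.1 c 1 y y' n)))
    (fun x y b n => by
      rw [hφ₃]; exact congrArg (φ x) (Subtype.ext (h3.ofB_smul_map_one b n y)))
    (fun x y b n => congrArg (φ x) (Subtype.ext (h3.2.2.2.2.1 1 y b n)))
  refine ⟨ψ, fun x ⟨v, hv⟩ => ?_, fun ψ' hψ' => huniq ψ' fun x n y => ?_⟩
  · induction hv using Submodule.span_induction with
    | mem _ h =>
      obtain ⟨⟨n, y⟩, rfl⟩ := h
      exact (congrArg ψ (h3.smul_map_one x n y)).trans (hψ x n y)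
    | zero => exact (congrArg ψ (smul_zero x)).trans (ψ.map_zero.trans (φₗ x).map_zero.symm)
    | add u w hu hw ihu ihw =>
      change ψ (x • (u + w)) = φₗ x (⟨u, hu⟩ + ⟨w, hw⟩)
      rw [smul_add, map_add, map_add]
      exact congrArg₂ (· + ·) ihu ihw
    | smul c u hu ihu =>
      change ψ (x • c • u) = φₗ x (c • ⟨u, hu⟩)
      rw [smul_comm x c u, map_smul ψ c, map_smul (φₗ x) c]
      exact congrArg (c • ·) ihu
  · rw [← h3.smul_map_one]
    exact hψ' x ⟨_, mem_spanOne n y⟩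

end RealizesTNT
end RelativeProjectivity

section Resolution

variable {K : Type} [Field K] {B : Type} [Ring B] [Algebra K B]
variable {N : Type} [AddCommGroup N] [Module K N] [Module B N] [Module Bᵐᵒᵖ N]
  [SMulCommClass B Bᵐᵒᵖ N] [IsScalarTower K B N] [IsScalarTower K Bᵐᵒᵖ N]
variable {P2 : Type} [AddCommGroup P2] [Module K P2]
  [Module (TensorAlg K B N) P2] [Module (TensorAlg K B N)ᵐᵒᵖ P2]
  {σ2 : TensorAlg K B N → TensorAlg K B N → P2}
variable {P3 : Type} [AddCommGroup P3] [Module K P3]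
  [Module (TensorAlg K B N) P3] [Module (TensorAlg K B N)ᵐᵒᵖ P3]
  {σ3 : TensorAlg K B N → N → TensorAlg K B N → P3}

theorem RealizesTT.exists_mulMap (h2 : RealizesTT K B N P2 σ2) :
    ∃ f : P2 →ₗ[K] TensorAlg K B N, (∀ x y, f (σ2 x y) = x * y) ∧
      (∀ (a : TensorAlg K B N) z, f (a • z) = a * f z) ∧
      ∀ (a : (TensorAlg K B N)ᵐᵒᵖ) z, f (a • z) = f z * a.unop := by
  have := h2.smulCommClass_left
  have := h2.smulCommClass_right
  obtain ⟨f, hf, -⟩ := h2.2.2.2.2.2 _ (· * ·) (fun c x x' y => by rw [add_mul, smul_mul_assoc])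
    (fun c x y y' => by rw [mul_add, mul_smul_comm]) fun x y b => mul_assoc _ _ _
  refine ⟨f, hf, fun a => h2.map_smul_eq_of_tmul f a (.mulLeft K a) fun x y => ?_,
    fun a => h2.map_smul_eq_of_tmul f a (.mulRight K a.unop) fun x y => ?_⟩
  · rw [h2.2.2.2.1, hf, LinearMap.mulLeft_apply, hf, mul_assoc]
  · rw [h2.2.2.2.2.1, hf, LinearMap.mulRight_apply, hf, mul_assoc]

theorem RealizesTNT.exists_boundaryMap (h2 : RealizesTT K B N P2 σ2)
    (h3 : RealizesTNT K B N P3 σ3) :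
    ∃ g : P3 →ₗ[K] P2, (∀ x n y, g (σ3 x n y)
        = σ2 (x * TensorAlg.ofN K B N n) y - σ2 x (TensorAlg.ofN K B N n * y)) ∧
      (∀ (a : TensorAlg K B N) z, g (a • z) = a • g z) ∧
      ∀ (a : (TensorAlg K B N)ᵐᵒᵖ) z, g (a • z) = a • g z := by
  have := h2.smulCommClass_left
  have := h2.smulCommClass_right
  have := h3.smulCommClass_left
  have := h3.smulCommClass_right
  obtain ⟨g, hg, -⟩ := h3.2.2.2.2.2.2.2 P2
    (fun x n y => σ2 (x * TensorAlg.ofN K B N n) y - σ2 x (TensorAlg.ofN K B N n * y))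
    (fun c x x' y n => by
      simp only [add_mul, smul_mul_assoc, h2.map_add_left, h2.map_smul_left, smul_sub]; abel)
    (fun c x y n n' => by
      simp only [map_add, map_smul, mul_add, add_mul, mul_smul_comm, smul_mul_assoc,
        h2.map_add_left, h2.map_smul_left, h2.map_add_right, h2.map_smul_right, smul_sub]; abel)
    (fun c x y y' n => by
      simp only [mul_add, mul_smul_comm, h2.map_add_right, h2.map_smul_right, smul_sub]; abel)
    (fun x y b n => by
      rw [mul_assoc, TensorAlg.ofB_mul_ofN, h2.2.2.1, ← mul_assoc, TensorAlg.ofB_mul_ofN])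
    (fun x y b n => by rw [← TensorAlg.ofN_mul_ofB, ← mul_assoc, h2.2.2.1, mul_assoc])
  refine ⟨g, hg,
    fun a => h3.map_smul_eq_of_tmul g a (DistribSMul.toLinearMap K P2 a) fun x n y => ?_,
    fun a => h3.map_smul_eq_of_tmul g a (DistribSMul.toLinearMap K P2 a) fun x n y => ?_⟩
  · rw [h3.2.2.2.2.2.1, hg, DistribSMul.toLinearMap_apply, hg, smul_sub, h2.2.2.2.1,
      h2.2.2.2.1, mul_assoc]
  · rw [h3.2.2.2.2.2.2.1, hg, DistribSMul.toLinearMap_apply, hg, smul_sub, h2.2.2.2.2.1,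
      h2.2.2.2.2.1, mul_assoc]

theorem RealizesTNT.exists_derivation (h3 : RealizesTNT K B N P3 σ3) :
    ∃ D : TensorAlg K B N →ₗ[K] P3, D.IsDerivation ∧ (∀ b, D (TensorAlg.ofB K B N b) = 0) ∧
      ∀ n, D (TensorAlg.ofN K B N n) = σ3 1 n 1 := by
  have := h3.smulCommClass_left_right
  have := h3.isScalarTower_left
  have := h3.isScalarTower_right
  refine TensorAlg.exists_derivation (h3.linearMapMiddle 1 1)
    (fun b n => h3.ofB_smul_map_one b n 1) fun b n => ?_
  rw [h3.linearMapMiddle_apply, h3.linearMapMiddle_apply, h3.2.2.2.2.2.2.1, h3.2.2.2.2.1,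
    MulOpposite.unop_op, one_mul, mul_one]

theorem boundaryMap_comp_derivation (h2 : RealizesTT K B N P2 σ2) {g : P3 →ₗ[K] P2}
    (hg : ∀ x n y, g (σ3 x n y)
      = σ2 (x * TensorAlg.ofN K B N n) y - σ2 x (TensorAlg.ofN K B N n * y))
    (hg_left : ∀ (a : TensorAlg K B N) z, g (a • z) = a • g z)
    (hg_right : ∀ (a : (TensorAlg K B N)ᵐᵒᵖ) z, g (a • z) = a • g z)
    {D : TensorAlg K B N →ₗ[K] P3} (hD : D.IsDerivation) (hDB : ∀ b, D (TensorAlg.ofB K B N b) = 0)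
    (hDN : ∀ n, D (TensorAlg.ofN K B N n) = σ3 1 n 1) :
    g ∘ₗ D = h2.linearMapLeft 1 - h2.linearMapRight 1 := by
  refine TensorAlg.derivation_ext (fun x y => ?_) (fun x y => ?_) (fun b => ?_) fun n => ?_
  · simp only [LinearMap.comp_apply, hD x y, map_add, hg_left, hg_right]
  · simp only [LinearMap.sub_apply, h2.linearMapLeft_apply, h2.linearMapRight_apply, smul_sub,
      h2.2.2.2.1, h2.2.2.2.2.1, mul_one, one_mul, MulOpposite.unop_op]
    abel
  · have hb := h2.2.2.1 1 1 b
    rw [one_mul, mul_one] at hb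
    simp [hDB, hb]
  · simp [hDN, hg]

theorem exists_contractingHomotopy (h2 : RealizesTT K B N P2 σ2) (h3 : RealizesTNT K B N P3 σ3)
    {g : P3 →ₗ[K] P2} (hg : ∀ x n y, g (σ3 x n y)
      = σ2 (x * TensorAlg.ofN K B N n) y - σ2 x (TensorAlg.ofN K B N n * y))
    (hg_left : ∀ (a : TensorAlg K B N) z, g (a • z) = a • g z)
    (hg_right : ∀ (a : (TensorAlg K B N)ᵐᵒᵖ) z, g (a • z) = a • g z) :
    ∃ r : P2 →ₗ[K] P3,
      (∀ (b : B) z, r (TensorAlg.ofB K B N b • z) = TensorAlg.ofB K B N b • r z) ∧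
      (∀ (a : (TensorAlg K B N)ᵐᵒᵖ) z, r (a • z) = a • r z) ∧ (∀ z, r (g z) = z) ∧
      ∀ x y, g (r (σ2 x y)) = σ2 x y - σ2 1 (x * y) := by
  have := h2.smulCommClass_left
  have := h2.smulCommClass_right
  have := h3.smulCommClass_left
  have := h3.smulCommClass_right
  have := h3.smulCommClass_left_right
  have := h3.isScalarTower_right
  obtain ⟨D, hD, hDB, hDN⟩ := h3.exists_derivation
  have hgD := boundaryMap_comp_derivation h2 hg hg_left hg_right hD hDB hDN
  obtain ⟨r, hr, -⟩ := h2.2.2.2.2.2 P3 (fun x y => MulOpposite.op y • D x)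
    (fun c x x' y => by rw [map_add, map_smul, smul_add, smul_comm])
    (fun c x y y' => by rw [MulOpposite.op_add, MulOpposite.op_smul, add_smul, smul_assoc])
    fun x y b => by rw [hD, hDB, smul_zero, zero_add, ← mul_smul, ← MulOpposite.op_mul]
  refine ⟨r, fun b => h2.map_smul_eq_of_tmul r _ (DistribSMul.toLinearMap K P3 _) fun x y => ?_,
    fun a => h2.map_smul_eq_of_tmul r a (DistribSMul.toLinearMap K P3 a) fun x y => ?_,
    fun z => LinearMap.congr_fun (h3.ext (f := r ∘ₗ g) (g := .id) fun x n y => ?_) z,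
    fun x y => ?_⟩
  · rw [h2.2.2.2.1, hr, DistribSMul.toLinearMap_apply, hr, hD, hDB, smul_zero, add_zero]
    exact (smul_comm _ _ _).symm
  · rw [h2.2.2.2.2.1, hr, DistribSMul.toLinearMap_apply, hr, MulOpposite.op_mul,
      MulOpposite.op_unop, mul_smul]
  · rw [LinearMap.comp_apply, hg, map_sub, hr, hr, hD, hDN, MulOpposite.op_mul, mul_smul,
      smul_add, add_sub_cancel_right, h3.smul_map_one, h3.2.2.2.2.2.2.1, MulOpposite.unop_op,
      one_mul, LinearMap.id_apply]
  · rw [hr, hg_right, ← LinearMap.comp_apply g D, hgD, LinearMap.sub_apply,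
      h2.linearMapLeft_apply, h2.linearMapRight_apply, smul_sub, h2.2.2.2.2.1, h2.2.2.2.2.1,
      MulOpposite.unop_op, one_mul]

end Resolution

theorem tensor_algebra_relative_projective_resolution
    (K : Type) [Field K] (B : Type) [Ring B] [Algebra K B]
    (N : Type) [AddCommGroup N] [Module K N] [Module B N] [Module Bᵐᵒᵖ N]
    [SMulCommClass B Bᵐᵒᵖ N] [IsScalarTower K B N] [IsScalarTower K Bᵐᵒᵖ N]
    (P2 : Type) [AddCommGroup P2] [Module K P2]
    [Module (TensorAlg K B N) P2] [Module (TensorAlg K B N)ᵐᵒᵖ P2]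
    (σ2 : TensorAlg K B N → TensorAlg K B N → P2)
    (h2 : RealizesTT K B N P2 σ2)
    (P3 : Type) [AddCommGroup P3] [Module K P3]
    [Module (TensorAlg K B N) P3] [Module (TensorAlg K B N)ᵐᵒᵖ P3]
    (σ3 : TensorAlg K B N → N → TensorAlg K B N → P3)
    (h3 : RealizesTNT K B N P3 σ3) :
    -- `T ⊗_B T` and `T ⊗_B N ⊗_B T` are relatively projective `T`-bimodules:
    IsRelProjTBimod K B N P2 ∧ IsRelProjTBimod K B N P3 ∧
    -- the maps `f`, `g` of the sequence and the contracting homotopy `s`, `r`: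
    ∃ (fm : P2 →ₗ[K] TensorAlg K B N) (gm : P3 →ₗ[K] P2)
      (s : TensorAlg K B N →ₗ[K] P2) (r : P2 →ₗ[K] P3),
      -- `f` is the multiplication of `T`:
      (∀ x y, fm (σ2 x y) = x * y) ∧
      -- `g(x ⊗ n ⊗ y) = xn ⊗ y − x ⊗ ny`:
      (∀ x n y, gm (σ3 x n y)
        = σ2 (x * TensorAlg.ofN K B N n) y - σ2 x (TensorAlg.ofN K B N n * y)) ∧
      -- `f` and `g` are `T`-bimodule maps:
      (∀ (a : TensorAlg K B N) (z : P2), fm (a • z) = a * fm z) ∧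
      (∀ (a : (TensorAlg K B N)ᵐᵒᵖ) (z : P2), fm (a • z) = fm z * a.unop) ∧
      (∀ (a : TensorAlg K B N) (z : P3), gm (a • z) = a • gm z) ∧
      (∀ (a : (TensorAlg K B N)ᵐᵒᵖ) (z : P3), gm (a • z) = a • gm z) ∧
      -- `f ∘ g = 0`:
      (∀ z : P3, fm (gm z) = 0) ∧
      -- `s` and `r` are `B−T`-bimodule maps:
      (∀ (b : B) (x : TensorAlg K B N),
        s (TensorAlg.ofB K B N b * x) = TensorAlg.ofB K B N b • s x) ∧
      (∀ (a : (TensorAlg K B N)ᵐᵒᵖ) (x : TensorAlg K B N),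
        s (x * a.unop) = a • s x) ∧
      (∀ (b : B) (z : P2), r (TensorAlg.ofB K B N b • z) = TensorAlg.ofB K B N b • r z) ∧
      (∀ (a : (TensorAlg K B N)ᵐᵒᵖ) (z : P2), r (a • z) = a • r z) ∧
      -- `f s = 1`, `r g = 1`, `g r + s f = 1`:
      (∀ x : TensorAlg K B N, fm (s x) = x) ∧
      (∀ z : P3, r (gm z) = z) ∧
      (∀ z : P2, gm (r z) + s (fm z) = z) := by
  obtain ⟨f, hf, hf_left, hf_right⟩ := h2.exists_mulMap
  obtain ⟨g, hg, hg_left, hg_right⟩ := h3.exists_boundaryMap h2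
  obtain ⟨r, hr_B, hr_op, hrg, hgr⟩ := exists_contractingHomotopy h2 h3 hg hg_left hg_right
  have hfg : f ∘ₗ g = 0 := h3.ext fun x n y => by
    rw [LinearMap.comp_apply, hg, map_sub, hf, hf, mul_assoc, sub_self, LinearMap.zero_apply]
  have hgr_sf : g ∘ₗ r + h2.linearMapRight 1 ∘ₗ f = .id := h2.ext fun x y => by
    simp [hgr, hf]
  refine ⟨isRelProjTBimod_of_realizesExtended _ _ h2.realizesExtended,
    isRelProjTBimod_of_realizesExtended _ _ h3.realizesExtended, f, g, h2.linearMapRight 1, r,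
    hf, hg, hf_left, hf_right, hg_left, hg_right, LinearMap.congr_fun hfg, fun b x => ?_,
    fun a x => (h2.2.2.2.2.1 a 1 x).symm, hr_B, hr_op, fun x => (hf 1 x).trans (one_mul x), hrg,
    LinearMap.congr_fun hgr_sf⟩
  rw [h2.linearMapRight_apply, h2.linearMapRight_apply, h2.2.2.2.1, mul_one, ← h2.2.2.1, one_mul]
end
end

section
/- Let Q be a finite quiver, R ⊆ ⟨Q₂⟩ a set of linear combinations of paths of length at least 2, B = kQ/⟨R⟩_Q, and let e, f ∈ Q₀. Let N = Bf ⊗ eB be the projective B-bimodule corresponding to the idempotent f ⊗ e of B ⊗ B^{op}. Then the algebra B⁺ = kQ⁺/⟨R⟩_{Q⁺} obtained by adding one new arrow a from e to f is isomorphic as a k-algebra to the tensor algebra T_B(N). -/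
/-!
STATEMENT 6: Let Q be a finite quiver, R ⊆ ⟨Q₂⟩ a set of linear combinations of paths of
length at least 2, B = kQ/⟨R⟩_Q, and let e, f ∈ Q₀. Let N = Bf ⊗ eB be the projective
B-bimodule corresponding to the idempotent f ⊗ e of B ⊗ B^op. Then the algebra
B⁺ = kQ⁺/⟨R⟩_{Q⁺} obtained by adding one new arrow a from e to f is isomorphic as a k-algebra
to the tensor algebra T_B(N).
-/

set_option linter.unusedSectionVars false

open scoped TensorProduct
noncomputable section

variable (K : Type) [Field K]

/-- A finite quiver: a finite set of vertices, a finite set of arrows,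
and source and target maps. -/
structure QuiverData : Type 1 where
  V : Type
  E : Type
  [fV : Fintype V]
  [fE : Fintype E]
  [dV : DecidableEq V]
  [dE : DecidableEq E]
  s : E → V
  t : E → V

attribute [instance] QuiverData.fV QuiverData.fE QuiverData.dV QuiverData.dE



/-- The free algebra on the vertices and arrows of a quiver. -/
abbrev FA (Q : QuiverData) : Type := FreeAlgebra K (Q.V ⊕ Q.E)

/-- The generator corresponding to a vertex. -/
def QuiverData.vtx (Q : QuiverData) (i : Q.V) : FA K Q := FreeAlgebra.ι K (Sum.inl i)
/-- The generator corresponding to an arrow. -/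
def QuiverData.arr (Q : QuiverData) (a : Q.E) : FA K Q := FreeAlgebra.ι K (Sum.inr a)

/-- The relations presenting the quotient `kQ/⟨R⟩` of the path algebra `kQ` of the quiver `Q`
by the two-sided ideal generated by a set `R`: vertices are orthogonal idempotents summing
to `1`, and arrows are composable with their source and target vertices; the elements of `R`
are set to zero.  (`kQ` itself is the case `R = ∅`.) -/
inductive PathRel (Q : QuiverData) (R : Set (FA K Q)) : FA K Q → FA K Q → Prop
  | vtx_mul (i j : Q.V) : PathRel Q R (Q.vtx K i * Q.vtx K j) (if i = j then Q.vtx K i else 0)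
  | vtx_sum : PathRel Q R (∑ i : Q.V, Q.vtx K i) 1
  | arr_t (a : Q.E) : PathRel Q R (Q.vtx K (Q.t a) * Q.arr K a) (Q.arr K a)
  | arr_s (a : Q.E) : PathRel Q R (Q.arr K a * Q.vtx K (Q.s a)) (Q.arr K a)
  | rel (r : FA K Q) (hr : r ∈ R) : PathRel Q R r 0

/-- The algebra `kQ/⟨R⟩_Q`. -/
abbrev BQA (Q : QuiverData) (R : Set (FA K Q)) : Type := RingQuot (PathRel K Q R)

/-- The canonical projection onto `kQ/⟨R⟩_Q`. -/
def BQA.mk (Q : QuiverData) (R : Set (FA K Q)) : FA K Q →ₐ[K] BQA K Q R :=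
  RingQuot.mkAlgHom K _

/-- The idempotent of `kQ/⟨R⟩_Q` given by a vertex. -/
def vtxIdem (Q : QuiverData) (R : Set (FA K Q)) (i : Q.V) : BQA K Q R :=
  BQA.mk K Q R (Q.vtx K i)

/-- A sequence of arrows is composable if the source of each arrow is the target of
the previous one.  (`c i` is the `i`-th arrow traversed.) -/
def Composable (Q : QuiverData) {n : ℕ} (c : Fin n → Q.E) : Prop :=
  ∀ (i : ℕ) (h : i + 1 < n), Q.s (c ⟨i+1, h⟩) = Q.t (c ⟨i, Nat.lt_of_succ_lt h⟩)

/-- The element of the free algebra given by a path `aₙ ⋯ a₁`: the ordered product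
of its arrows. -/
def chainWord (Q : QuiverData) {n : ℕ} (c : Fin n → Q.E) : FA K Q :=
  ((List.ofFn c).reverse.map (Q.arr K)).prod

/-- The set of paths of length at least `2`, inside the free algebra. -/
def lenTwoWords (Q : QuiverData) : Set (FA K Q) :=
  {w | ∃ (n : ℕ), 2 ≤ n ∧ ∃ c : Fin n → Q.E, Composable Q c ∧ w = chainWord K Q c}

/-- `R ⊆ ⟨Q₂⟩`: the elements of `R` are linear combinations of paths of length at least 2. -/
def RelationsOK (Q : QuiverData) (R : Set (FA K Q)) : Prop :=
  R ⊆ (Submodule.span K (lenTwoWords K Q) : Submodule K (FA K Q))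

/-- The ideal `⟨R⟩_Q` is admissible: all long enough paths vanish in `kQ/⟨R⟩_Q`, i.e.
`⟨Qₙ⟩ ⊆ ⟨R⟩_Q` for some `n`. -/
def Admissible (Q : QuiverData) (R : Set (FA K Q)) : Prop :=
  ∃ m : ℕ, ∀ n, m ≤ n → ∀ c : Fin n → Q.E, Composable Q c → BQA.mk K Q R (chainWord K Q c) = 0

/-- `Q` together with `R` presents a bound quiver algebra. -/
def BoundQuiverAlgebra (Q : QuiverData) (R : Set (FA K Q)) : Prop :=
  R.Finite ∧ RelationsOK K Q R ∧ Admissible K Q R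

/-- The quiver `Q⁺`, obtained from `Q` by adding one new arrow from `e` to `f`. -/
def QuiverData.plus (Q : QuiverData) (e f : Q.V) : QuiverData where
  V := Q.V
  E := Q.E ⊕ Unit
  s := Sum.elim Q.s (fun _ => e)
  t := Sum.elim Q.t (fun _ => f)

/-- The inclusion of the free algebra of `Q` into that of `Q⁺`. -/
def inclFA (Q : QuiverData) (e f : Q.V) : FA K Q →ₐ[K] FA K (Q.plus e f) :=
  FreeAlgebra.lift K (fun x => FreeAlgebra.ι K (Sum.map id Sum.inl x))

/-- The algebra `B⁺ = kQ⁺/⟨R⟩_{Q⁺}`. -/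
abbrev BQAplus (Q : QuiverData) (R : Set (FA K Q)) (e f : Q.V) : Type :=
  BQA K (Q.plus e f) (inclFA K Q e f '' R)

section OpTensor
variable {K} (S : Type) [Ring S] [Algebra K S]
variable (M N : Type) [AddCommGroup M] [AddCommGroup N] [Module K M] [Module K N]
  [Module Sᵐᵒᵖ N] [SMulCommClass K Sᵐᵒᵖ N]

/-- Right action of `S` on `N` as a `K`-linear endomorphism. -/
def opAct (b : Sᵐᵒᵖ) : N →ₗ[K] N where
  toFun n := b • n
  map_add' := smul_add b
  map_smul' c n := (smul_comm c b n).symm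

@[simp] theorem opAct_apply (b : Sᵐᵒᵖ) (n : N) : opAct (K := K) S N b n = b • n := rfl

/-- Right `S`-module structure on `M ⊗[K] N` induced by the right `S`-module structure
on the right factor `N`. -/
instance Module.opTensor : Module Sᵐᵒᵖ (M ⊗[K] N) where
  smul b z := LinearMap.lTensor M (opAct S N b) z
  one_smul z := by
    show LinearMap.lTensor M (opAct S N 1) z = z
    induction z using TensorProduct.induction_on with
    | zero => simp
    | tmul m n => simp
    | add x y hx hy => rw [map_add, hx, hy]
  mul_smul b b' z := by
    show LinearMap.lTensor M (opAct S N (b * b')) z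
      = LinearMap.lTensor M (opAct S N b) (LinearMap.lTensor M (opAct S N b') z)
    induction z using TensorProduct.induction_on with
    | zero => simp
    | tmul m n => simp [mul_smul]
    | add x y hx hy => rw [map_add, hx, hy, map_add, map_add]
  smul_zero b := map_zero _
  smul_add b z z' := map_add _ z z'
  add_smul b b' z := by
    show LinearMap.lTensor M (opAct S N (b + b')) z
      = LinearMap.lTensor M (opAct S N b) z + LinearMap.lTensor M (opAct S N b') z
    induction z using TensorProduct.induction_on with
    | zero => simp
    | tmul m n => simp [add_smul, TensorProduct.tmul_add]
    | add x y hx hy =>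
        rw [map_add, hx, hy, map_add, map_add]
        abel
  zero_smul z := by
    show LinearMap.lTensor M (opAct S N 0) z = 0
    induction z using TensorProduct.induction_on with
    | zero => simp
    | tmul m n => simp
    | add x y hx hy => rw [map_add, hx, hy, add_zero]

theorem opTensor_smul_tmul (b : Sᵐᵒᵖ) (m : M) (n : N) :
    b • (m ⊗ₜ[K] n) = m ⊗ₜ[K] (b • n) := rfl

instance opTensor_smulCommClass [Module S M] [SMulCommClass K S M] :
    SMulCommClass S Sᵐᵒᵖ (M ⊗[K] N) where
  smul_comm a b z := by
    induction z using TensorProduct.induction_on with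
    | zero => simp
    | tmul m n =>
        rw [opTensor_smul_tmul, TensorProduct.smul_tmul', TensorProduct.smul_tmul',
          opTensor_smul_tmul]
    | add x y hx hy => rw [smul_add, smul_add, hx, hy, ← smul_add, ← smul_add]

instance opTensor_isScalarTower [IsScalarTower K Sᵐᵒᵖ N] :
    IsScalarTower K Sᵐᵒᵖ (M ⊗[K] N) where
  smul_assoc c b z := by
    show LinearMap.lTensor M (opAct S N (c • b)) z
      = c • LinearMap.lTensor M (opAct S N b) z
    induction z using TensorProduct.induction_on with
    | zero => simp
    | tmul m n =>
        rw [LinearMap.lTensor_tmul, LinearMap.lTensor_tmul, opAct_apply, opAct_apply,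
          smul_assoc, TensorProduct.tmul_smul]
    | add x y hx hy => rw [map_add, hx, hy, map_add, smul_add]

end OpTensor

section Ideals
variable (S : Type) [Ring S] [Algebra K S]

/-- The left ideal `S·f` as a left `S`-module. -/
def LIdeal (f : S) : Type := Submodule.span S {f}
instance (f : S) : AddCommGroup (LIdeal S f) := inferInstanceAs (AddCommGroup (Submodule.span S {f}))
instance (f : S) : Module S (LIdeal S f) := inferInstanceAs (Module S (Submodule.span S {f}))
instance (f : S) : Module K (LIdeal S f) := inferInstanceAs (Module K (Submodule.span S {f}))
instance (f : S) : IsScalarTower K S (LIdeal S f) :=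
  inferInstanceAs (IsScalarTower K S (Submodule.span S {f}))
instance (f : S) : SMulCommClass K S (LIdeal S f) := inferInstance

/-- The right ideal `e·S` as a right `S`-module. -/
def RIdeal (e : S) : Type := Submodule.span Sᵐᵒᵖ {e}
instance (e : S) : AddCommGroup (RIdeal S e) := inferInstanceAs (AddCommGroup (Submodule.span Sᵐᵒᵖ {e}))
instance (e : S) : Module Sᵐᵒᵖ (RIdeal S e) := inferInstanceAs (Module Sᵐᵒᵖ (Submodule.span Sᵐᵒᵖ {e}))
instance (e : S) : Module K (RIdeal S e) := inferInstanceAs (Module K (Submodule.span Sᵐᵒᵖ {e}))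
instance (e : S) : IsScalarTower K Sᵐᵒᵖ (RIdeal S e) :=
  inferInstanceAs (IsScalarTower K Sᵐᵒᵖ (Submodule.span Sᵐᵒᵖ {e}))
instance (e : S) : SMulCommClass K Sᵐᵒᵖ (RIdeal S e) := inferInstance

/-- The bimodule `S·f ⊗ e·S`. -/
def IdTens (f e : S) : Type := (LIdeal S f) ⊗[K] (RIdeal S e)
instance (f e : S) : AddCommGroup (IdTens K S f e) := inferInstanceAs (AddCommGroup ((LIdeal S f) ⊗[K] (RIdeal S e)))
instance (f e : S) : Module K (IdTens K S f e) := inferInstanceAs (Module K ((LIdeal S f) ⊗[K] (RIdeal S e)))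
instance (f e : S) : Module S (IdTens K S f e) := inferInstanceAs (Module S ((LIdeal S f) ⊗[K] (RIdeal S e)))
instance (f e : S) : Module Sᵐᵒᵖ (IdTens K S f e) := inferInstanceAs (Module Sᵐᵒᵖ ((LIdeal S f) ⊗[K] (RIdeal S e)))
instance (f e : S) : SMulCommClass S Sᵐᵒᵖ (IdTens K S f e) :=
  inferInstanceAs (SMulCommClass S Sᵐᵒᵖ ((LIdeal S f) ⊗[K] (RIdeal S e)))
instance (f e : S) : IsScalarTower K S (IdTens K S f e) :=
  inferInstanceAs (IsScalarTower K S ((LIdeal S f) ⊗[K] (RIdeal S e)))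
instance (f e : S) : IsScalarTower K Sᵐᵒᵖ (IdTens K S f e) :=
  inferInstanceAs (IsScalarTower K Sᵐᵒᵖ ((LIdeal S f) ⊗[K] (RIdeal S e)))

end Ideals

/-!
Both algebras are the free `B`-algebra on one element `x` subject to `f x = x = x e`.  For `B⁺`
this is read off the presentation: the new arrow `a` only has to satisfy `f a = a = a e`.  For
`T_B(N)` it holds because `N = Bf ⊗ eB` is freely generated as a bimodule by `f ⊗ e`: any
`x ∈ f A e` gives the bimodule map `y ⊗ z ↦ y x z`.  Hence `a ↦ f ⊗ e` and `f ⊗ e ↦ a` extend to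
algebra maps which are mutually inverse, as is checked on generators.
-/

section BoundQuiverAlgebra
variable {K} {Q : QuiverData} {R : Set (FA K Q)} {A : Type*} [Semiring A] [Algebra K A]

theorem BQA.mk_eq_mk_of_pathRel {x y : FA K Q} (h : PathRel K Q R x y) :
    BQA.mk K Q R x = BQA.mk K Q R y :=
  RingQuot.mkAlgHom_rel K h

theorem BQA.mk_surjective : Function.Surjective (BQA.mk K Q R) :=
  RingQuot.mkAlgHom_surjective K _

theorem vtxIdem_mul (i j : Q.V) :
    vtxIdem K Q R i * vtxIdem K Q R j = if i = j then vtxIdem K Q R i else 0 := by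
  rw [vtxIdem, vtxIdem, ← map_mul, BQA.mk_eq_mk_of_pathRel (PathRel.vtx_mul i j),
    apply_ite (BQA.mk K Q R), map_zero]

theorem isIdempotentElem_vtxIdem (i : Q.V) : IsIdempotentElem (vtxIdem K Q R i) := by
  rw [IsIdempotentElem, vtxIdem_mul, if_pos rfl]

theorem sum_vtxIdem : ∑ i, vtxIdem K Q R i = 1 := by
  simp only [vtxIdem, ← map_sum, BQA.mk_eq_mk_of_pathRel PathRel.vtx_sum, map_one]

theorem vtxIdem_target_mul_arr (a : Q.E) :
    vtxIdem K Q R (Q.t a) * BQA.mk K Q R (Q.arr K a) = BQA.mk K Q R (Q.arr K a) := by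
  rw [vtxIdem, ← map_mul, BQA.mk_eq_mk_of_pathRel (PathRel.arr_t a)]

theorem arr_mul_vtxIdem_source (a : Q.E) :
    BQA.mk K Q R (Q.arr K a) * vtxIdem K Q R (Q.s a) = BQA.mk K Q R (Q.arr K a) := by
  rw [vtxIdem, ← map_mul, BQA.mk_eq_mk_of_pathRel (PathRel.arr_s a)]

theorem BQA.mk_eq_zero_of_mem {r : FA K Q} (hr : r ∈ R) : BQA.mk K Q R r = 0 := by
  rw [BQA.mk_eq_mk_of_pathRel (PathRel.rel r hr), map_zero]

variable (K Q R) in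
structure IsBoundQuiverRep (g : FA K Q →ₐ[K] A) : Prop where
  vtx_mul : ∀ i j, g (Q.vtx K i) * g (Q.vtx K j) = if i = j then g (Q.vtx K i) else 0
  vtx_sum : ∑ i, g (Q.vtx K i) = 1
  arr_t : ∀ a, g (Q.vtx K (Q.t a)) * g (Q.arr K a) = g (Q.arr K a)
  arr_s : ∀ a, g (Q.arr K a) * g (Q.vtx K (Q.s a)) = g (Q.arr K a)
  rel : ∀ r ∈ R, g r = 0

theorem IsBoundQuiverRep.map_eq_map {g : FA K Q →ₐ[K] A} (hg : IsBoundQuiverRep K Q R g)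
    {x y : FA K Q} (h : PathRel K Q R x y) : g x = g y := by
  induction h with
  | vtx_mul i j => rw [map_mul, hg.vtx_mul, apply_ite g, map_zero]
  | vtx_sum => rw [map_sum, hg.vtx_sum, map_one]
  | arr_t a => rw [map_mul, hg.arr_t]
  | arr_s a => rw [map_mul, hg.arr_s]
  | rel r hr => rw [hg.rel r hr, map_zero]

def BQA.lift (g : FA K Q →ₐ[K] A) (hg : IsBoundQuiverRep K Q R g) : BQA K Q R →ₐ[K] A :=
  RingQuot.liftAlgHom K ⟨g, fun _ _ => hg.map_eq_map⟩

@[simp] theorem BQA.lift_mk {g : FA K Q →ₐ[K] A} (hg : IsBoundQuiverRep K Q R g) (w : FA K Q) :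
    BQA.lift g hg (BQA.mk K Q R w) = g w :=
  RingQuot.liftAlgHom_mkAlgHom_apply K g _ w

theorem BQA.hom_ext {φ ψ : BQA K Q R →ₐ[K] A}
    (hvtx : ∀ i, φ (vtxIdem K Q R i) = ψ (vtxIdem K Q R i))
    (harr : ∀ a, φ (BQA.mk K Q R (Q.arr K a)) = ψ (BQA.mk K Q R (Q.arr K a))) : φ = ψ := by
  refine RingQuot.ringQuot_ext' K φ ψ (FreeAlgebra.hom_ext (funext ?_))
  rintro (i | a)
  exacts [hvtx i, harr a]

end BoundQuiverAlgebra

section TensorAlgebraLift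
variable {K} {B : Type} [Ring B] [Algebra K B]
  {N : Type} [AddCommGroup N] [Module K N] [Module B N] [Module Bᵐᵒᵖ N]
  [SMulCommClass B Bᵐᵒᵖ N] [IsScalarTower K B N] [IsScalarTower K Bᵐᵒᵖ N]
  {A : Type*} [Semiring A] [Algebra K A]

def TensorAlg.lift (g : B →ₐ[K] A) (h : N →ₗ[K] A)
    (hleft : ∀ b n, g b * h n = h (b • n))
    (hright : ∀ b n, h n * g b = h (MulOpposite.op b • n)) : TensorAlg K B N →ₐ[K] A :=
  RingQuot.liftAlgHom K ⟨FreeAlgebra.lift K (Sum.elim g h), by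
    rintro _ _ ⟨⟩ <;> simp [hleft, hright]⟩

variable {g : B →ₐ[K] A} {h : N →ₗ[K] A} {hleft : ∀ b n, g b * h n = h (b • n)}
  {hright : ∀ b n, h n * g b = h (MulOpposite.op b • n)}

@[simp] theorem TensorAlg.lift_ofB (b : B) :
    TensorAlg.lift g h hleft hright (TensorAlg.ofB K B N b) = g b := by
  simp [TensorAlg.lift, TensorAlg.ofB]

@[simp] theorem TensorAlg.lift_ofN (n : N) :
    TensorAlg.lift g h hleft hright (TensorAlg.ofN K B N n) = h n := by
  simp [TensorAlg.lift, TensorAlg.ofN]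

theorem TensorAlg.hom_ext {φ ψ : TensorAlg K B N →ₐ[K] A}
    (hB : ∀ b, φ (TensorAlg.ofB K B N b) = ψ (TensorAlg.ofB K B N b))
    (hN : ∀ n, φ (TensorAlg.ofN K B N n) = ψ (TensorAlg.ofN K B N n)) : φ = ψ := by
  refine RingQuot.ringQuot_ext' K φ ψ (FreeAlgebra.hom_ext (funext ?_))
  rintro (b | n)
  exacts [hB b, hN n]

end TensorAlgebraLift

section IdTens
variable {K} {S : Type} [Ring S] [Algebra K S] {f e : S} {A : Type*} [Semiring A] [Algebra K A]

variable (S f) in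
def LIdeal.gen : LIdeal S f := ⟨f, Submodule.mem_span_singleton_self f⟩

variable (S e) in
def RIdeal.gen : RIdeal S e := ⟨e, Submodule.mem_span_singleton_self e⟩

theorem LIdeal.val_smul_gen (hf : IsIdempotentElem f) (x : LIdeal S f) :
    x.1 • LIdeal.gen S f = x := by
  obtain ⟨s, hs⟩ := Submodule.mem_span_singleton.mp x.2
  refine Subtype.ext ?_
  change x.1 * f = x.1
  rw [← hs, smul_eq_mul, mul_assoc, hf.eq]

theorem RIdeal.op_val_smul_gen (he : IsIdempotentElem e) (y : RIdeal S e) :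
    MulOpposite.op y.1 • RIdeal.gen S e = y := by
  obtain ⟨s, hs⟩ := Submodule.mem_span_singleton.mp y.2
  refine Subtype.ext ?_
  change e * y.1 = y.1
  rw [← hs, MulOpposite.smul_eq_mul_unop, ← mul_assoc, he.eq]

variable (K S f e) in
def IdTens.gen : IdTens K S f e := LIdeal.gen S f ⊗ₜ[K] RIdeal.gen S e

theorem IdTens.tmul_eq_smul_gen (hf : IsIdempotentElem f) (he : IsIdempotentElem e)
    (x : LIdeal S f) (y : RIdeal S e) :
    (x ⊗ₜ[K] y : IdTens K S f e) = MulOpposite.op y.1 • x.1 • IdTens.gen K S f e := by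
  conv_lhs => rw [← LIdeal.val_smul_gen hf x, ← RIdeal.op_val_smul_gen he y]
  rfl

theorem IdTens.smul_gen (hf : IsIdempotentElem f) :
    f • IdTens.gen K S f e = IdTens.gen K S f e :=
  congrArg (· ⊗ₜ[K] RIdeal.gen S e) (LIdeal.val_smul_gen hf (LIdeal.gen S f))

theorem IdTens.op_smul_gen (he : IsIdempotentElem e) :
    MulOpposite.op e • IdTens.gen K S f e = IdTens.gen K S f e :=
  congrArg (LIdeal.gen S f ⊗ₜ[K] ·) (RIdeal.op_val_smul_gen he (RIdeal.gen S e))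

@[elab_as_elim]
theorem IdTens.induction_on {motive : IdTens K S f e → Prop} (n : IdTens K S f e)
    (zero : motive 0) (tmul : ∀ x y, motive (x ⊗ₜ[K] y))
    (add : ∀ n n', motive n → motive n' → motive (n + n')) : motive n :=
  TensorProduct.induction_on n zero tmul add

variable (K S f) in
def LIdeal.valₗ : LIdeal S f →ₗ[K] S where
  toFun x := x.1
  map_add' _ _ := rfl
  map_smul' _ _ := rfl

variable (K S e) in
def RIdeal.valₗ : RIdeal S e →ₗ[K] S where
  toFun y := y.1
  map_add' _ _ := rfl
  map_smul' _ _ := rfl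

variable (K) in
def IdTens.sandwich (g : S →ₐ[K] A) (a : A) : IdTens K S f e →ₗ[K] A :=
  TensorProduct.lift <| (LinearMap.mul K A).compl₁₂
    (LinearMap.mulRight K a ∘ₗ g.toLinearMap ∘ₗ LIdeal.valₗ K S f)
    (g.toLinearMap ∘ₗ RIdeal.valₗ K S e)

theorem IdTens.sandwich_tmul (g : S →ₐ[K] A) (a : A) (x : LIdeal S f) (y : RIdeal S e) :
    IdTens.sandwich K g a (x ⊗ₜ[K] y : IdTens K S f e) = g x.1 * a * g y.1 := rfl

theorem IdTens.mul_sandwich (g : S →ₐ[K] A) (a : A) (b : S) (n : IdTens K S f e) :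
    g b * IdTens.sandwich K g a n = IdTens.sandwich K g a (b • n) := by
  induction n using IdTens.induction_on with
  | zero => rw [smul_zero, map_zero, mul_zero]
  | tmul x y =>
    change g b * (g x.1 * a * g y.1) = g (b * x.1) * a * g y.1
    rw [map_mul, mul_assoc, mul_assoc, mul_assoc]
  | add n n' hn hn' => rw [smul_add, map_add, map_add, mul_add, hn, hn']

theorem IdTens.sandwich_mul (g : S →ₐ[K] A) (a : A) (b : S) (n : IdTens K S f e) :
    IdTens.sandwich K g a n * g b = IdTens.sandwich K g a (MulOpposite.op b • n) := by
  induction n using IdTens.induction_on with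
  | zero => rw [smul_zero, map_zero, zero_mul]
  | tmul x y =>
    change g x.1 * a * g y.1 * g b = g x.1 * a * g (y.1 * b)
    rw [map_mul, mul_assoc]
  | add n n' hn hn' => rw [smul_add, map_add, map_add, add_mul, hn, hn']

theorem TensorAlg.ofN_tmul_idTens (hf : IsIdempotentElem f) (he : IsIdempotentElem e)
    (x : LIdeal S f) (y : RIdeal S e) :
    TensorAlg.ofN K S (IdTens K S f e) (x ⊗ₜ[K] y) =
      TensorAlg.ofB K S (IdTens K S f e) x.1 *
        TensorAlg.ofN K S (IdTens K S f e) (IdTens.gen K S f e) *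
          TensorAlg.ofB K S (IdTens K S f e) y.1 := by
  rw [IdTens.tmul_eq_smul_gen hf he, TensorAlg.ofB_mul_ofN, TensorAlg.ofN_mul_ofB]

theorem TensorAlg.hom_ext_idTens (hf : IsIdempotentElem f) (he : IsIdempotentElem e)
    {φ ψ : TensorAlg K S (IdTens K S f e) →ₐ[K] A}
    (hB : ∀ b, φ (TensorAlg.ofB K S _ b) = ψ (TensorAlg.ofB K S _ b))
    (hgen : φ (TensorAlg.ofN K S _ (IdTens.gen K S f e)) =
      ψ (TensorAlg.ofN K S _ (IdTens.gen K S f e))) : φ = ψ := by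
  refine TensorAlg.hom_ext hB fun n => ?_
  induction n using IdTens.induction_on with
  | zero => rw [map_zero, map_zero, map_zero]
  | tmul x y => simp only [TensorAlg.ofN_tmul_idTens hf he, map_mul, hB, hgen]
  | add n n' hn hn' => rw [map_add, map_add, map_add, hn, hn']

end IdTens

namespace QuiverData
variable (Q : QuiverData) {e f : Q.V}

@[simp] theorem plus_s_inl (a : Q.E) :
    (Q.plus e f).s (Sum.inl a : Q.E ⊕ Unit) = Q.s a := rfl

@[simp] theorem plus_t_inl (a : Q.E) :
    (Q.plus e f).t (Sum.inl a : Q.E ⊕ Unit) = Q.t a := rfl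

@[simp] theorem plus_s_inr (u : Unit) :
    (Q.plus e f).s (Sum.inr u : Q.E ⊕ Unit) = e := rfl

@[simp] theorem plus_t_inr (u : Unit) :
    (Q.plus e f).t (Sum.inr u : Q.E ⊕ Unit) = f := rfl

end QuiverData

section InclFA
variable {K} {Q : QuiverData} {e f : Q.V}

theorem inclFA_vtx (i : Q.V) : inclFA K Q e f (Q.vtx K i) = (Q.plus e f).vtx K i :=
  FreeAlgebra.lift_ι_apply (R := K) _ _

theorem inclFA_arr (a : Q.E) :
    inclFA K Q e f (Q.arr K a) = (Q.plus e f).arr K (Sum.inl a) :=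
  FreeAlgebra.lift_ι_apply (R := K) _ _

end InclFA

namespace BQAplus
variable {K} {Q : QuiverData} {R : Set (FA K Q)} {e f : Q.V} {A : Type*} [Semiring A] [Algebra K A]

theorem isBoundQuiverRep_mk_comp_inclFA :
    IsBoundQuiverRep K Q R
      ((BQA.mk K (Q.plus e f) (inclFA K Q e f '' R)).comp (inclFA K Q e f)) where
  vtx_mul i j := by
    simp only [AlgHom.comp_apply, inclFA_vtx]
    exact vtxIdem_mul (Q := Q.plus e f) i j
  vtx_sum := by
    simp only [AlgHom.comp_apply, inclFA_vtx]
    exact sum_vtxIdem (Q := Q.plus e f)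
  arr_t a := by
    simp only [AlgHom.comp_apply, inclFA_vtx, inclFA_arr]
    exact vtxIdem_target_mul_arr (Q := Q.plus e f) (Sum.inl a)
  arr_s a := by
    simp only [AlgHom.comp_apply, inclFA_vtx, inclFA_arr]
    exact arr_mul_vtxIdem_source (Q := Q.plus e f) (Sum.inl a)
  rel r hr := BQA.mk_eq_zero_of_mem (Set.mem_image_of_mem _ hr)

variable (K Q R e f) in
def ofB : BQA K Q R →ₐ[K] BQAplus K Q R e f :=
  BQA.lift _ isBoundQuiverRep_mk_comp_inclFA

variable (K Q R e f) in
def arrow : BQAplus K Q R e f :=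
  BQA.mk K (Q.plus e f) _ ((Q.plus e f).arr K (Sum.inr ()))

theorem ofB_mk (w : FA K Q) :
    ofB K Q R e f (BQA.mk K Q R w) = BQA.mk K (Q.plus e f) _ (inclFA K Q e f w) :=
  BQA.lift_mk _ w

theorem ofB_vtxIdem (i : Q.V) :
    ofB K Q R e f (vtxIdem K Q R i) = vtxIdem K (Q.plus e f) _ i := by
  rw [vtxIdem, ofB_mk, inclFA_vtx]
  rfl

theorem ofB_vtxIdem_mul_arrow :
    ofB K Q R e f (vtxIdem K Q R f) * arrow K Q R e f = arrow K Q R e f := by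
  rw [ofB_vtxIdem]
  exact vtxIdem_target_mul_arr (Q := Q.plus e f) (Sum.inr ())

theorem arrow_mul_ofB_vtxIdem :
    arrow K Q R e f * ofB K Q R e f (vtxIdem K Q R e) = arrow K Q R e f := by
  rw [ofB_vtxIdem]
  exact arr_mul_vtxIdem_source (Q := Q.plus e f) (Sum.inr ())

theorem hom_ext {φ ψ : BQAplus K Q R e f →ₐ[K] A}
    (hB : ∀ b, φ (ofB K Q R e f b) = ψ (ofB K Q R e f b))
    (harrow : φ (arrow K Q R e f) = ψ (arrow K Q R e f)) : φ = ψ := by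
  refine BQA.hom_ext (fun (i : Q.V) => ?_) ?_
  · rw [← ofB_vtxIdem, hB]
  · rintro (a | ⟨⟩)
    · rw [← inclFA_arr, ← ofB_mk, hB]
    · exact harrow

section Lift
variable (g : BQA K Q R →ₐ[K] A) (x : A)

variable (e f) in
def liftFA : FA K (Q.plus e f) →ₐ[K] A :=
  FreeAlgebra.lift K (Sum.elim (fun i => g (vtxIdem K Q R i))
    (Sum.elim (fun a => g (BQA.mk K Q R (Q.arr K a))) fun _ => x))

@[simp] theorem liftFA_vtx (i : Q.V) :
    liftFA e f g x ((Q.plus e f).vtx K i) = g (vtxIdem K Q R i) :=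
  FreeAlgebra.lift_ι_apply (R := K) _ _

@[simp] theorem liftFA_arr_inl (a : Q.E) :
    liftFA e f g x ((Q.plus e f).arr K (Sum.inl a)) = g (BQA.mk K Q R (Q.arr K a)) :=
  FreeAlgebra.lift_ι_apply (R := K) _ _

@[simp] theorem liftFA_arr_inr (u : Unit) :
    liftFA e f g x ((Q.plus e f).arr K (Sum.inr u)) = x :=
  FreeAlgebra.lift_ι_apply (R := K) _ _

theorem liftFA_comp_inclFA :
    (liftFA e f g x).comp (inclFA K Q e f) = g.comp (BQA.mk K Q R) := by
  refine FreeAlgebra.hom_ext (funext ?_)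
  rintro (i | a)
  · exact (congrArg _ (inclFA_vtx i)).trans (liftFA_vtx g x i)
  · exact (congrArg _ (inclFA_arr a)).trans (liftFA_arr_inl g x a)

theorem isBoundQuiverRep_liftFA (hfx : g (vtxIdem K Q R f) * x = x)
    (hxe : x * g (vtxIdem K Q R e) = x) :
    IsBoundQuiverRep K (Q.plus e f) (inclFA K Q e f '' R) (liftFA e f g x) where
  vtx_mul (i j : Q.V) := by
    rw [liftFA_vtx, liftFA_vtx, ← map_mul, vtxIdem_mul, apply_ite g, map_zero]
    -- the two sides decide `i = j` with the instances of `Q⁺` and of `Q`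
    rfl
  vtx_sum := by
    change ∑ i : Q.V, liftFA e f g x ((Q.plus e f).vtx K i) = 1
    simp only [liftFA_vtx]
    rw [← map_sum, sum_vtxIdem, map_one]
  arr_t
    | .inl a => by
      rw [QuiverData.plus_t_inl, liftFA_arr_inl, liftFA_vtx, ← map_mul, vtxIdem_target_mul_arr]
    | .inr _ => by rw [QuiverData.plus_t_inr, liftFA_arr_inr, liftFA_vtx, hfx]
  arr_s
    | .inl a => by
      rw [QuiverData.plus_s_inl, liftFA_arr_inl, liftFA_vtx, ← map_mul, arr_mul_vtxIdem_source]
    | .inr _ => by rw [QuiverData.plus_s_inr, liftFA_arr_inr, liftFA_vtx, hxe]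
  rel := by
    rintro _ ⟨r, hr, rfl⟩
    rw [← AlgHom.comp_apply, liftFA_comp_inclFA, AlgHom.comp_apply, BQA.mk_eq_zero_of_mem hr,
      map_zero]

def lift (hfx : g (vtxIdem K Q R f) * x = x) (hxe : x * g (vtxIdem K Q R e) = x) :
    BQAplus K Q R e f →ₐ[K] A :=
  BQA.lift _ (isBoundQuiverRep_liftFA g x hfx hxe)

variable {g x} {hfx : g (vtxIdem K Q R f) * x = x} {hxe : x * g (vtxIdem K Q R e) = x}

@[simp] theorem lift_ofB (b : BQA K Q R) : lift g x hfx hxe (ofB K Q R e f b) = g b := by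
  obtain ⟨w, rfl⟩ := BQA.mk_surjective b
  rw [ofB_mk, lift, BQA.lift_mk, ← AlgHom.comp_apply, liftFA_comp_inclFA,
    AlgHom.comp_apply]

@[simp] theorem lift_arrow : lift g x hfx hxe (arrow K Q R e f) = x := by
  rw [lift, arrow, BQA.lift_mk, liftFA_arr_inr]

end Lift

variable (Q R e f)

local notation "N" => IdTens K (BQA K Q R) (vtxIdem K Q R f) (vtxIdem K Q R e)

def toTensorAlg : BQAplus K Q R e f →ₐ[K] TensorAlg K (BQA K Q R) N :=
  lift (TensorAlg.ofB K _ _) (TensorAlg.ofN K _ _ (IdTens.gen K _ _ _))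
    (by rw [TensorAlg.ofB_mul_ofN, IdTens.smul_gen (isIdempotentElem_vtxIdem f)])
    (by rw [TensorAlg.ofN_mul_ofB, IdTens.op_smul_gen (isIdempotentElem_vtxIdem e)])

def ofTensorAlg : TensorAlg K (BQA K Q R) N →ₐ[K] BQAplus K Q R e f :=
  TensorAlg.lift (ofB K Q R e f) (IdTens.sandwich K (ofB K Q R e f) (arrow K Q R e f))
    (IdTens.mul_sandwich _ _) (IdTens.sandwich_mul _ _)

theorem ofTensorAlg_ofN_gen :
    ofTensorAlg Q R e f (TensorAlg.ofN K _ N (IdTens.gen K _ _ _)) = arrow K Q R e f := by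
  rw [ofTensorAlg, TensorAlg.lift_ofN, IdTens.gen, IdTens.sandwich_tmul]
  exact (congrArg (· * _) ofB_vtxIdem_mul_arrow).trans arrow_mul_ofB_vtxIdem

def equivTensorAlg : BQAplus K Q R e f ≃ₐ[K] TensorAlg K (BQA K Q R) N :=
  AlgEquiv.ofAlgHom (toTensorAlg Q R e f) (ofTensorAlg Q R e f)
    (TensorAlg.hom_ext_idTens (isIdempotentElem_vtxIdem f) (isIdempotentElem_vtxIdem e)
      (fun b => by simp [ofTensorAlg, toTensorAlg])
      (by rw [AlgHom.comp_apply, ofTensorAlg_ofN_gen, toTensorAlg, lift_arrow]; rfl))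
    (hom_ext (fun b => by simp [ofTensorAlg, toTensorAlg])
      (by rw [AlgHom.comp_apply, toTensorAlg, lift_arrow, ofTensorAlg_ofN_gen]; rfl))

end BQAplus

theorem add_arrow_is_tensor_algebra_general
    (K : Type) [Field K] (Q : QuiverData) (R : Set (FA K Q))
    (e f : Q.V) :
    Nonempty ((BQAplus K Q R e f) ≃ₐ[K]
      (TensorAlg K (BQA K Q R)
        (IdTens K (BQA K Q R) (vtxIdem K Q R f) (vtxIdem K Q R e)))) :=
  ⟨BQAplus.equivTensorAlg Q R e f⟩

theorem add_arrow_is_tensor_algebra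
    (K : Type) [Field K] (Q : QuiverData) (R : Set (FA K Q))
    (hR : RelationsOK K Q R) (e f : Q.V) :
    Nonempty ((BQAplus K Q R e f) ≃ₐ[K]
      (TensorAlg K (BQA K Q R)
        (IdTens K (BQA K Q R) (vtxIdem K Q R f) (vtxIdem K Q R e)))) :=
  add_arrow_is_tensor_algebra_general K Q R e f
end
end
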